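/- arXiv:0806.0921 — 2 statements merged into one kernel-verified Lean document; each statement's English description precedes it below -/
import Mathlib

section
/- Suppose q ≥ 3, b ≥ 2, 2q ≤ b/ln(b), and 0 ≤ u ≤ 1/b. Then (q-1)·(1 - (1-u)/(q-1))^b ≤ 1/b. -/
theorem stmt10 (q b : ℕ) (hq : 3 ≤ q) (hb : 2 ≤ b)
    (hqb : 2 * (q : ℝ) * Real.log b ≤ b)
    (u : ℝ) (hu0 : 0 ≤ u) (hu1 : u ≤ 1 / b) :
    ((q : ℝ) - 1) * (1 - (1 - u) / ((q : ℝ) - 1)) ^ b ≤ 1 / b := by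
  have hbR : (2:ℝ) ≤ b := by exact_mod_cast hb
  have hb0 : (0:ℝ) < b := by linarith
  have hqR : (3:ℝ) ≤ q := by exact_mod_cast hq
  have hQ : (2:ℝ) ≤ (q:ℝ) - 1 := by linarith
  set Q : ℝ := (q:ℝ) - 1 with hQdef
  have hQ0 : 0 < Q := by linarith
  have hlb : Real.log 2 ≤ Real.log b := Real.log_le_log (by norm_num) hbR
  have hl2 : (0.6931471803 : ℝ) < Real.log 2 := Real.log_two_gt_d9
  have hlogb : (1:ℝ)/2 < Real.log b := by linarith
  set x : ℝ := (1 - u) / Q with hx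
  have hxQ : x * Q = 1 - u := div_mul_cancel₀ _ hQ0.ne'
  have hbu : u * (b:ℝ) ≤ 1 := (le_div_iff₀ hb0).mp hu1
  have hu12 : u ≤ 1/2 := by nlinarith
  have hx0 : 0 ≤ x := div_nonneg (by linarith) hQ0.le
  have hx1 : x ≤ 1 := by rw [hx, div_le_one hQ0]; linarith
  have h1 : (1 - x) ^ b ≤ Real.exp (-x) ^ b := by
    apply pow_le_pow_left₀ (by linarith)
    linarith [Real.add_one_le_exp (-x)]
  have h2 : Real.exp (-x) ^ b = Real.exp ((b:ℝ) * (-x)) := by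
    rw [← Real.exp_nat_mul]
  have hQb : Q ≤ b := by nlinarith
  have hlQ : Real.log Q ≤ Real.log b := Real.log_le_log hQ0 hQb
  have h3 : 2 * Real.log b * Q ≤ (b:ℝ) - 1 := by nlinarith
  have h4 : (b:ℝ) - 1 ≤ (b:ℝ) * (1 - u) := by nlinarith
  have hkey : Real.log Q + Real.log b ≤ (b:ℝ) * x := by nlinarith
  calc Q * (1 - x) ^ b ≤ Q * Real.exp ((b:ℝ) * (-x)) := by
        exact mul_le_mul_of_nonneg_left (h1.trans_eq h2) hQ0.le
    _ = Real.exp (Real.log Q + (b:ℝ) * (-x)) := by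
        rw [Real.exp_add, Real.exp_log hQ0]
    _ ≤ Real.exp (-Real.log b) := Real.exp_le_exp.mpr (by linarith)
    _ = 1 / b := by rw [Real.exp_neg, Real.exp_log hb0, one_div]
end

section
/- Suppose q ≥ 3, b and H are integers with b ≥ 2, H ≥ 1, b - 2 ≥ 2(q-1)·ln(q-1), and H - 1 ≥ ln(n)/(3·ln(b)) for a real n ≥ 1. Let ε = (q-1)·exp(-(b-2)/(q-1)). Then ε^(-(H-1)) ≥ n^((b-2)/(6(q-1)·ln(b))). -/
theorem stmt14 (q b H : ℤ) (n : ℝ) (hq : 3 ≤ q) (hb : 2 ≤ b) (hH : 1 ≤ H)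
    (hn : 1 ≤ n)
    (hqb : 2 * ((q : ℝ) - 1) * Real.log ((q : ℝ) - 1) ≤ (b : ℝ) - 2)
    (hHn : Real.log n / (3 * Real.log b) ≤ (H : ℝ) - 1) :
    n ^ (((b : ℝ) - 2) / (6 * ((q : ℝ) - 1) * Real.log b)) ≤
      (((q : ℝ) - 1) * Real.exp (-(((b : ℝ) - 2) / ((q : ℝ) - 1)))) ^
        (-((H : ℝ) - 1)) := by
  have hq' : (3 : ℝ) ≤ (q : ℝ) := by exact_mod_cast hq
  have hQ : (0 : ℝ) < (q : ℝ) - 1 := by linarith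
  have hLQ : 0 < Real.log ((q : ℝ) - 1) := Real.log_pos (by linarith)
  have hA : (0 : ℝ) < (b : ℝ) - 2 := by nlinarith
  have hLB : 0 < Real.log (b : ℝ) := Real.log_pos (by linarith)
  have hn0 : (0 : ℝ) < n := by linarith
  have hL : 0 ≤ Real.log n := Real.log_nonneg hn
  have hH1 : (0 : ℝ) ≤ (H : ℝ) - 1 :=
    le_trans (by positivity) hHn
  have hε : (0 : ℝ) < ((q : ℝ) - 1) * Real.exp (-(((b : ℝ) - 2) / ((q : ℝ) - 1))) := by
    positivity
  rw [Real.rpow_def_of_pos hn0, Real.rpow_def_of_pos hε, Real.exp_le_exp]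
  have hlogε : Real.log (((q : ℝ) - 1) * Real.exp (-(((b : ℝ) - 2) / ((q : ℝ) - 1)))) =
      Real.log ((q : ℝ) - 1) - ((b : ℝ) - 2) / ((q : ℝ) - 1) := by
    rw [Real.log_mul (ne_of_gt hQ) (Real.exp_ne_zero _), Real.log_exp]
    ring
  rw [hlogε]
  have s1 : Real.log ((q : ℝ) - 1) ≤ ((b : ℝ) - 2) / (2 * ((q : ℝ) - 1)) := by
    rw [le_div_iff₀ (by positivity)]
    nlinarith
  have s2 : ((b : ℝ) - 2) / (6 * ((q : ℝ) - 1) * Real.log b) * Real.log n =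
      (Real.log n / (3 * Real.log b)) * (((b : ℝ) - 2) / (2 * ((q : ℝ) - 1))) := by
    field_simp
    ring
  have s3 : (Real.log n / (3 * Real.log b)) * (((b : ℝ) - 2) / (2 * ((q : ℝ) - 1))) ≤
      ((H : ℝ) - 1) * (((b : ℝ) - 2) / (2 * ((q : ℝ) - 1))) := by
    apply mul_le_mul_of_nonneg_right hHn (by positivity)
  have s4 : ((H : ℝ) - 1) * (((b : ℝ) - 2) / (2 * ((q : ℝ) - 1))) ≤
      ((H : ℝ) - 1) * (((b : ℝ) - 2) / ((q : ℝ) - 1) - Real.log ((q : ℝ) - 1)) := by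
    apply mul_le_mul_of_nonneg_left _ hH1
    have : ((b : ℝ) - 2) / (2 * ((q : ℝ) - 1)) = ((b : ℝ) - 2) / ((q : ℝ) - 1)
        - ((b : ℝ) - 2) / (2 * ((q : ℝ) - 1)) := by
      field_simp
      ring
    linarith
  nlinarith [s2, s3, s4]
end
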